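/- arXiv:1710.09649 — 6 statements merged into one kernel-verified Lean document; each statement's English description precedes it below -/
import Mathlib

section
/- For all x, y ∈ ℝ and all unit vectors r ∈ ℝ², ⟨Df(x,y)r, r⟩ ≥ α − 4a(x² + y²), i.e. the minimal quadratic form value λ⁻(x,y) = min_{‖r‖=1} ⟨Df(x,y)r, r⟩ satisfies λ⁻(x,y) ≥ α − 4a(x²+y²). -/
/-!
On the unit circle the quadratic form of `Df(x, y)` equals `α - 2a(x² + y²)` minus a linear form
in `(r₁² - r₂², 2r₁r₂)`, which is again a unit vector. The coefficient vector of that linear form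
has length `√(a² + b²) (x² + y²) ≤ 2a (x² + y²)`, so Cauchy–Schwarz gives the bound.
-/

theorem mul_add_mul_le_of_sq_add_sq_le {A B c s K : ℝ} (hK : 0 ≤ K) (hcs : c ^ 2 + s ^ 2 = 1)
    (hAB : A ^ 2 + B ^ 2 ≤ K ^ 2) : A * c + B * s ≤ K := by
  have lagrange : (A * c + B * s) ^ 2 + (A * s - B * c) ^ 2 = (A ^ 2 + B ^ 2) * (c ^ 2 + s ^ 2) := by
    ring
  have hsq : (A * c + B * s) ^ 2 ≤ K ^ 2 := by
    nlinarith [sq_nonneg (A * s - B * c)]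
  exact (abs_le_of_sq_le_sq' hsq hK).2

theorem sq_sub_sq_sq_add_two_mul_sq (r₁ r₂ : ℝ) :
    (r₁ ^ 2 - r₂ ^ 2) ^ 2 + (2 * r₁ * r₂) ^ 2 = (r₁ ^ 2 + r₂ ^ 2) ^ 2 := by
  ring

theorem hopf_quadForm_eq_of_unit (α β a b x y r₁ r₂ : ℝ) (hr : r₁ ^ 2 + r₂ ^ 2 = 1) :
    r₁ * ((α - a * y ^ 2 - 3 * a * x ^ 2 - 2 * b * x * y) * r₁ +
        (-β - 2 * a * x * y - b * x ^ 2 - 3 * b * y ^ 2) * r₂) +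
      r₂ * ((β - 2 * a * x * y + b * y ^ 2 + 3 * b * x ^ 2) * r₁ +
        (α - a * x ^ 2 - 3 * a * y ^ 2 + 2 * b * x * y) * r₂) =
    α - 2 * a * (x ^ 2 + y ^ 2) -
      ((a * (x ^ 2 - y ^ 2) + 2 * b * x * y) * (r₁ ^ 2 - r₂ ^ 2) +
        (2 * a * x * y - b * (x ^ 2 - y ^ 2)) * (2 * r₁ * r₂)) := by
  linear_combination (α - 2 * a * (x ^ 2 + y ^ 2)) * hr

theorem hopf_coeff_sq_add_sq (a b x y : ℝ) :
    (a * (x ^ 2 - y ^ 2) + 2 * b * x * y) ^ 2 + (2 * a * x * y - b * (x ^ 2 - y ^ 2)) ^ 2 =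
      (a ^ 2 + b ^ 2) * (x ^ 2 + y ^ 2) ^ 2 := by
  ring

theorem stmt4_general (α β a b : ℝ) (hb : |b| ≤ a) :
    ∀ x y r₁ r₂ : ℝ, r₁ ^ 2 + r₂ ^ 2 = 1 →
      r₁ * ((α - a * y ^ 2 - 3 * a * x ^ 2 - 2 * b * x * y) * r₁ +
          (-β - 2 * a * x * y - b * x ^ 2 - 3 * b * y ^ 2) * r₂) +
        r₂ * ((β - 2 * a * x * y + b * y ^ 2 + 3 * b * x ^ 2) * r₁ +
          (α - a * x ^ 2 - 3 * a * y ^ 2 + 2 * b * x * y) * r₂) ≥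
      α - 4 * a * (x ^ 2 + y ^ 2) := by
  intro x y r₁ r₂ hr
  have ha : 0 ≤ a := (abs_nonneg b).trans hb
  have hb2 : b ^ 2 ≤ a ^ 2 := sq_le_sq' (abs_le.mp hb).1 (abs_le.mp hb).2
  have hX : 0 ≤ x ^ 2 + y ^ 2 := by positivity
  have hunit : (r₁ ^ 2 - r₂ ^ 2) ^ 2 + (2 * r₁ * r₂) ^ 2 = 1 := by
    rw [sq_sub_sq_sq_add_two_mul_sq, hr, one_pow]
  have hcoeff : (a * (x ^ 2 - y ^ 2) + 2 * b * x * y) ^ 2 +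
      (2 * a * x * y - b * (x ^ 2 - y ^ 2)) ^ 2 ≤ (2 * a * (x ^ 2 + y ^ 2)) ^ 2 := by
    rw [hopf_coeff_sq_add_sq]
    nlinarith [sq_nonneg (x ^ 2 + y ^ 2)]
  have key := mul_add_mul_le_of_sq_add_sq_le (by positivity) hunit hcoeff
  rw [ge_iff_le, hopf_quadForm_eq_of_unit α β a b x y r₁ r₂ hr]
  linarith

theorem stmt4 (α β a b : ℝ) (ha : 0 < a) (hb : |b| ≤ a) :
    ∀ x y r₁ r₂ : ℝ, r₁ ^ 2 + r₂ ^ 2 = 1 →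
      r₁ * ((α - a * y ^ 2 - 3 * a * x ^ 2 - 2 * b * x * y) * r₁ +
          (-β - 2 * a * x * y - b * x ^ 2 - 3 * b * y ^ 2) * r₂) +
        r₂ * ((β - 2 * a * x * y + b * y ^ 2 + 3 * b * x ^ 2) * r₁ +
          (α - a * x ^ 2 - 3 * a * y ^ 2 + 2 * b * x * y) * r₂) ≥
      α - 4 * a * (x ^ 2 + y ^ 2) :=
  stmt4_general α β a b hb
end

section
/- For all x, u, v, x̂, û, v̂ ∈ ℝ: (|x u| + |v y|)² ≤ (x² + v²)(u² + y²); consequently, for points Z = (x,y), Ẑ = (x̂,ŷ) in ℝ², with r = x²+y² and r̂ = x̂²+ŷ², one has |(x x̂ + y ŷ)(r + r̂)| + |(x ŷ − x̂ y)(r − r̂)| ≤ r² + r̂². -/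
/-!
The first inequality is Cauchy–Schwarz for the vectors `(|x|, |v|)` and `(|u|, |y|)`.
For the second, apply it to `a = x x̂ + y ŷ`, `b = x ŷ - x̂ y` and `r + r̂`, `r - r̂`: by the
Brahmagupta–Fibonacci identity `a² + b² = r r̂`, and `(r + r̂)² + (r - r̂)² = 2 (r² + r̂²)`, so the
square of the left-hand side is at most `2 r r̂ (r² + r̂²) ≤ (r² + r̂²)²`.
-/

lemma abs_mul_add_abs_mul_sq_le {R : Type*} [CommRing R] [LinearOrder R] [IsStrictOrderedRing R]
    (x u v y : R) : (|x * u| + |v * y|) ^ 2 ≤ (x ^ 2 + v ^ 2) * (u ^ 2 + y ^ 2) := by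
  rw [abs_mul, abs_mul, ← sq_abs x, ← sq_abs u, ← sq_abs v, ← sq_abs y]
  nlinarith [sq_nonneg (|x| * |y| - |v| * |u|)]

theorem stmt5 :
    (∀ x u v y : ℝ, (|x * u| + |v * y|) ^ 2 ≤ (x ^ 2 + v ^ 2) * (u ^ 2 + y ^ 2)) ∧
    (∀ x y x' y' : ℝ,
      |(x * x' + y * y') * ((x ^ 2 + y ^ 2) + (x' ^ 2 + y' ^ 2))| +
        |(x * y' - x' * y) * ((x ^ 2 + y ^ 2) - (x' ^ 2 + y' ^ 2))| ≤
      (x ^ 2 + y ^ 2) ^ 2 + (x' ^ 2 + y' ^ 2) ^ 2) := by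
  refine ⟨abs_mul_add_abs_mul_sq_le, fun x y x' y' => ?_⟩
  have hbrahmagupta : (x * x' + y * y') ^ 2 + (x * y' - x' * y) ^ 2 =
      (x ^ 2 + y ^ 2) * (x' ^ 2 + y' ^ 2) := by ring
  set r := x ^ 2 + y ^ 2
  set r' := x' ^ 2 + y' ^ 2
  refine le_of_pow_le_pow_left₀ two_ne_zero (by positivity) ?_
  calc _ ≤ ((x * x' + y * y') ^ 2 + (x * y' - x' * y) ^ 2) * ((r + r') ^ 2 + (r - r') ^ 2) :=
        abs_mul_add_abs_mul_sq_le _ _ _ _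
    _ = (2 * r * r') * (r ^ 2 + r' ^ 2) := by rw [hbrahmagupta]; ring
    _ ≤ (r ^ 2 + r' ^ 2) * (r ^ 2 + r' ^ 2) := by gcongr; exact two_mul_le_add_sq r r'
    _ = _ := (sq _).symm
end

section
/- Suppose |b| ≤ a and a > 0. Then for any two points Z = (x,y) and Ẑ = (x̂,ŷ) in ℝ², the quantity R := a(r² + r̂² − (x x̂ + y ŷ)(r + r̂)) + b(x ŷ − x̂ y)(r − r̂) is nonnegative, where r = x² + y² and r̂ = x̂² + ŷ². -/
/-!
With `c = x x̂ + y ŷ` and `s = x ŷ - x̂ y` one has `c² + s² = r r̂`, and the quantity equals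
`a (r² + r̂²) - (a c (r + r̂) - b s (r - r̂))`. By Cauchy–Schwarz and `b² ≤ a²`, the square of the
subtracted term is at most `r r̂ (a² (r + r̂)² + b² (r - r̂)²) ≤ 2 r r̂ · a² (r² + r̂²)`, which is at
most `(a (r² + r̂²))²` because `2 r r̂ ≤ r² + r̂²`.
-/

section

variable {R : Type*} [CommRing R] [LinearOrder R] [IsStrictOrderedRing R]

theorem mul_add_mul_sq_le_sq_add_sq_mul_sq_add_sq (p q u v : R) :
    (p * u + q * v) ^ 2 ≤ (p ^ 2 + q ^ 2) * (u ^ 2 + v ^ 2) := by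
  linear_combination sq_nonneg (p * v - q * u)

variable {a b r r' c s : R}

theorem sq_mul_sub_mul_le_sq (hab : |b| ≤ a) (hr : 0 ≤ r) (hr' : 0 ≤ r')
    (hcs : c ^ 2 + s ^ 2 = r * r') :
    (a * c * (r + r') - b * s * (r - r')) ^ 2 ≤ (a * (r ^ 2 + r' ^ 2)) ^ 2 := by
  have hba : b ^ 2 ≤ a ^ 2 := sq_le_sq' (abs_le.mp hab).1 (abs_le.mp hab).2
  calc (a * c * (r + r') - b * s * (r - r')) ^ 2
      = (a * (r + r') * c + -(b * (r - r')) * s) ^ 2 := by ring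
    _ ≤ ((a * (r + r')) ^ 2 + (-(b * (r - r'))) ^ 2) * (c ^ 2 + s ^ 2) :=
      mul_add_mul_sq_le_sq_add_sq_mul_sq_add_sq _ _ _ _
    _ ≤ 2 * a ^ 2 * (r ^ 2 + r' ^ 2) * (r * r') := by
      rw [hcs]
      gcongr
      linear_combination (mul_le_mul_of_nonneg_right hba (sq_nonneg (r - r')))
    _ ≤ (a * (r ^ 2 + r' ^ 2)) ^ 2 := by
      linear_combination (mul_le_mul_of_nonneg_left (two_mul_le_add_sq r r')
        (by positivity : 0 ≤ a ^ 2 * (r ^ 2 + r' ^ 2)))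

theorem mul_sub_add_mul_nonneg (hab : |b| ≤ a) (hr : 0 ≤ r) (hr' : 0 ≤ r')
    (hcs : c ^ 2 + s ^ 2 = r * r') :
    0 ≤ a * (r ^ 2 + r' ^ 2 - c * (r + r')) + b * s * (r - r') := by
  have ha : 0 ≤ a := (abs_nonneg b).trans hab
  have hdom := (abs_le_of_sq_le_sq' (sq_mul_sub_mul_le_sq hab hr hr' hcs) (by positivity)).2
  linarith

end

theorem stmt6_general (a b : ℝ) (hb : |b| ≤ a) (x y x' y' : ℝ) :
    0 ≤ a * ((x ^ 2 + y ^ 2) ^ 2 + (x' ^ 2 + y' ^ 2) ^ 2 -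
        (x * x' + y * y') * ((x ^ 2 + y ^ 2) + (x' ^ 2 + y' ^ 2))) +
      b * (x * y' - x' * y) * ((x ^ 2 + y ^ 2) - (x' ^ 2 + y' ^ 2)) :=
  mul_sub_add_mul_nonneg hb (by positivity) (by positivity) (by ring)

theorem stmt6 (a b : ℝ) (ha : 0 < a) (hb : |b| ≤ a) (x y x' y' : ℝ) :
    0 ≤ a * ((x ^ 2 + y ^ 2) ^ 2 + (x' ^ 2 + y' ^ 2) ^ 2 -
        (x * x' + y * y') * ((x ^ 2 + y ^ 2) + (x' ^ 2 + y' ^ 2))) +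
      b * (x * y' - x' * y) * ((x ^ 2 + y ^ 2) - (x' ^ 2 + y' ^ 2)) :=
  stmt6_general a b hb x y x' y'
end

section
/- Let a > 0 and |b| ≤ a, α < 0. Then ⟨f(Z) − f(Ẑ), Z − Ẑ⟩ ≤ α ‖Z − Ẑ‖² for all Z, Ẑ ∈ ℝ², where f is the Hopf normal form vector field; i.e., f is one-sided Lipschitz with constant α. -/
/-! Identify ℝ² with ℂ and write `μ = α + iβ`, `c = a + ib`; then `f z = μ z - c ‖z‖² z`.
The linear part contributes exactly `Re μ * ‖z - w‖²`, so it remains to see that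
`z ↦ c ‖z‖² z` is monotone. With `R = ‖z‖²`, `S = ‖w‖²` and `⟪z, w⟫ = p + iq`, monotonicity reads
`a (R + S) p - b (S - R) q ≤ a (R² + S²)`, which follows from Cauchy–Schwarz, `p² + q² ≤ R S`,
`b² ≤ a²` and `2 R S ≤ R² + S²`. -/

open ComplexConjugate InnerProductSpace

theorem cross_term_le_of_sq_add_sq_le_mul {a b R S p q : ℝ} (hb : |b| ≤ a)
    (hpq : p ^ 2 + q ^ 2 ≤ R * S) :
    a * (R + S) * p - b * (S - R) * q ≤ a * (R ^ 2 + S ^ 2) := by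
  have ha : 0 ≤ a := (abs_nonneg b).trans hb
  have hb2 : b ^ 2 ≤ a ^ 2 := sq_le_sq' (abs_le.mp hb).1 (abs_le.mp hb).2
  refine le_of_sq_le_sq ?_ (by positivity)
  calc (a * (R + S) * p - b * (S - R) * q) ^ 2
      ≤ (a ^ 2 * (R + S) ^ 2 + b ^ 2 * (S - R) ^ 2) * (p ^ 2 + q ^ 2) := by
        nlinarith [sq_nonneg (a * (R + S) * q + b * (S - R) * p)]
    _ ≤ (a ^ 2 * (R + S) ^ 2 + a ^ 2 * (S - R) ^ 2) * (R * S) := by gcongr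
    _ = a ^ 2 * (R ^ 2 + S ^ 2) * (2 * R * S) := by ring
    _ ≤ a ^ 2 * (R ^ 2 + S ^ 2) * (R ^ 2 + S ^ 2) := by
        gcongr; nlinarith [sq_nonneg (R - S)]
    _ = (a * (R ^ 2 + S ^ 2)) ^ 2 := by ring

section HopfField

variable {E : Type*} [NormedAddCommGroup E] [InnerProductSpace ℂ E]

def hopfCubic (c : ℂ) (z : E) : E := (c * (‖z‖ : ℂ) ^ 2) • z

def hopfField (μ c : ℂ) (z : E) : E := μ • z - hopfCubic c z

theorem re_inner_hopfCubic_sub_nonneg {c : ℂ} (hc : |c.im| ≤ c.re) (z w : E) :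
    0 ≤ (⟪z - w, hopfCubic c z - hopfCubic c w⟫_ℂ).re := by
  have hCS : (⟪z, w⟫_ℂ).re ^ 2 + (⟪z, w⟫_ℂ).im ^ 2 ≤ ‖z‖ ^ 2 * ‖w‖ ^ 2 := by
    have h : ‖⟪z, w⟫_ℂ‖ ^ 2 ≤ (‖z‖ * ‖w‖) ^ 2 := by gcongr; exact norm_inner_le_norm z w
    rw [Complex.sq_norm, Complex.normSq_apply] at h
    linarith
  have expand : ⟪z - w, hopfCubic c z - hopfCubic c w⟫_ℂ =
      c * (((‖z‖ ^ 2) ^ 2 + (‖w‖ ^ 2) ^ 2 : ℝ)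
        - ((‖w‖ ^ 2 : ℝ) : ℂ) * ⟪z, w⟫_ℂ - ((‖z‖ ^ 2 : ℝ) : ℂ) * conj ⟪z, w⟫_ℂ) := by
    simp only [hopfCubic, inner_sub_left, inner_sub_right, inner_smul_right,
      inner_self_eq_norm_sq_to_K, RCLike.ofReal_eq_complex_ofReal, inner_conj_symm]
    push_cast
    ring
  rw [expand]
  simp only [Complex.mul_re, Complex.mul_im, Complex.sub_re, Complex.sub_im, Complex.ofReal_re,
    Complex.ofReal_im, Complex.conj_re, Complex.conj_im]
  nlinarith [cross_term_le_of_sq_add_sq_le_mul hc hCS]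

theorem re_inner_hopfField_sub_le (μ : ℂ) {c : ℂ} (hc : |c.im| ≤ c.re) (z w : E) :
    (⟪z - w, hopfField μ c z - hopfField μ c w⟫_ℂ).re ≤ μ.re * ‖z - w‖ ^ 2 := by
  have split : hopfField μ c z - hopfField μ c w =
      μ • (z - w) - (hopfCubic c z - hopfCubic c w) := by
    simp only [hopfField, smul_sub]
    abel
  have linear : (⟪z - w, μ • (z - w)⟫_ℂ).re = μ.re * ‖z - w‖ ^ 2 := by
    rw [inner_smul_right, inner_self_eq_norm_sq_to_K, RCLike.ofReal_eq_complex_ofReal,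
      ← Complex.ofReal_pow, Complex.re_mul_ofReal]
  rw [split, inner_sub_right, Complex.sub_re, linear]
  linarith [re_inner_hopfCubic_sub_nonneg hc z w]

end HopfField

theorem stmt7_general (α β a b : ℝ) (hb : |b| ≤ a) :
    ∀ x y x' y' : ℝ,
      ((α * x - β * y - (a * x - b * y) * (x ^ 2 + y ^ 2)) -
          (α * x' - β * y' - (a * x' - b * y') * (x' ^ 2 + y' ^ 2))) * (x - x') +
        ((α * y + β * x - (b * x + a * y) * (x ^ 2 + y ^ 2)) -
          (α * y' + β * x' - (b * x' + a * y') * (x' ^ 2 + y' ^ 2))) * (y - y') ≤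
      α * ((x - x') ^ 2 + (y - y') ^ 2) := by
  intro x y x' y'
  have h := re_inner_hopfField_sub_le ⟨α, β⟩ (c := ⟨a, b⟩) hb (⟨x, y⟩ : ℂ) ⟨x', y'⟩
  simp only [hopfField, hopfCubic, smul_eq_mul, ← Complex.ofReal_pow, Complex.sq_norm,
    Complex.normSq_apply, RCLike.inner_apply, map_sub, Complex.mul_re, Complex.mul_im,
    Complex.sub_re, Complex.sub_im, Complex.ofReal_re, Complex.ofReal_im, Complex.conj_re,
    Complex.conj_im] at h
  linarith

theorem stmt7 (α β a b : ℝ) (hα : α < 0) (ha : 0 < a) (hb : |b| ≤ a) :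
    ∀ x y x' y' : ℝ,
      ((α * x - β * y - (a * x - b * y) * (x ^ 2 + y ^ 2)) -
          (α * x' - β * y' - (a * x' - b * y') * (x' ^ 2 + y' ^ 2))) * (x - x') +
        ((α * y + β * x - (b * x + a * y) * (x ^ 2 + y ^ 2)) -
          (α * y' + β * x' - (b * x' + a * y') * (x' ^ 2 + y' ^ 2))) * (y - y') ≤
      α * ((x - x') ^ 2 + (y - y') ^ 2) :=
  stmt7_general α β a b hb
end

section
/- The sum of Lyapunov exponents λ_Σ = 2α − 4aσ² · (∫₀^∞ r³ exp((2αr² − aσ²r⁴)/2) dr)/(∫₀^∞ r exp((2αr² − aσ²r⁴)/2) dr) satisfies λ_Σ = −2α − 4√a σ · exp(−α²/(2aσ²)) / ∫_{−α/(σ√a)}^∞ exp(−r²/2) dr, and in particular λ_Σ < 0 for every α ∈ ℝ. -/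
open Real MeasureTheory

open Set Filter

/-!
After the substitution `u = r²` both integrals become moments of `F u = exp (α u - c u² / 2)`,
`c = a σ²`, over `(0, ∞)`. Integrating `F' = (α - c u) F` gives `c ∫ u F = α ∫ F + 1`, so
`λ_Σ = -2α - 4 / ∫ F`, and completing the square turns `∫ F` into a Gaussian tail integral. For
`α < 0` the bound `F u ≤ exp (α u)` gives `∫ F ≤ -1/α`, whence `λ_Σ ≤ 2α < 0`.
-/

theorem integral_Ioi_comp_add_right {E : Type*} [NormedAddCommGroup E] [NormedSpace ℝ E]
    (f : ℝ → E) (a m : ℝ) :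
    ∫ x in Ioi a, f (x + m) = ∫ x in Ioi (a + m), f x := by
  have h := (measurePreserving_add_right volume m).setIntegral_preimage_emb
    (measurableEmbedding_addRight m) f (Ioi (a + m))
  rwa [preimage_add_const_Ioi, add_sub_cancel_right] at h

theorem integral_Ioi_mul_comp_sq (g : ℝ → ℝ) :
    ∫ r in Ioi (0 : ℝ), r * g (r ^ 2) = 2⁻¹ * ∫ u in Ioi (0 : ℝ), g u := by
  rw [← integral_comp_rpow_Ioi_of_pos (g := g) two_pos, ← integral_const_mul]
  refine setIntegral_congr_fun measurableSet_Ioi fun r _ => ?_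
  norm_num [smul_eq_mul]
  ring

section LinearSubQuadratic

variable {α c : ℝ}

theorem exp_linear_sub_quadratic_eq (hc : c ≠ 0) (u : ℝ) :
    exp (α * u - c * u ^ 2 / 2) = exp (α ^ 2 / (2 * c)) * exp (-(c / 2) * (u - α / c) ^ 2) := by
  rw [← exp_add]
  congr 1
  field_simp
  ring

theorem integrable_exp_linear_sub_quadratic (hc : 0 < c) :
    Integrable fun u => exp (α * u - c * u ^ 2 / 2) := by
  simp_rw [exp_linear_sub_quadratic_eq hc.ne']
  exact ((integrable_exp_neg_mul_sq (half_pos hc)).comp_sub_right (α / c)).const_mul _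

theorem integrable_mul_exp_linear_sub_quadratic (hc : 0 < c) :
    Integrable fun u => u * exp (α * u - c * u ^ 2 / 2) := by
  have hG : Integrable fun x : ℝ => (x + α / c) * exp (-(c / 2) * x ^ 2) := by
    simpa only [Pi.add_def, add_mul] using (integrable_mul_exp_neg_mul_sq (half_pos hc)).add
      ((integrable_exp_neg_mul_sq (half_pos hc)).const_mul (α / c))
  refine ((hG.comp_sub_right (α / c)).const_mul (exp (α ^ 2 / (2 * c)))).congr
    (Eventually.of_forall fun u => ?_)
  simp only [exp_linear_sub_quadratic_eq hc.ne' u, sub_add_cancel]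
  ring

theorem hasDerivAt_exp_linear_sub_quadratic (u : ℝ) :
    HasDerivAt (fun u => exp (α * u - c * u ^ 2 / 2))
      ((α - c * u) * exp (α * u - c * u ^ 2 / 2)) u := by
  have h : HasDerivAt (fun u : ℝ => α * u - c * u ^ 2 / 2) (α - c * u) u :=
    (((hasDerivAt_id' u).const_mul α).sub
      (((hasDerivAt_pow 2 u).const_mul c).div_const 2)).congr_deriv (by norm_num; ring)
  simpa only [mul_comm] using h.exp

theorem mul_integral_Ioi_mul_exp_linear_sub_quadratic (hc : 0 < c) :
    c * ∫ u in Ioi (0 : ℝ), u * exp (α * u - c * u ^ 2 / 2) =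
      α * (∫ u in Ioi (0 : ℝ), exp (α * u - c * u ^ 2 / 2)) + 1 := by
  have hF := integrable_exp_linear_sub_quadratic (α := α) hc
  have huF := integrable_mul_exp_linear_sub_quadratic (α := α) hc
  have hF' : Integrable fun u => (α - c * u) * exp (α * u - c * u ^ 2 / 2) := by
    simpa only [Pi.sub_def, sub_mul, mul_assoc] using (hF.const_mul α).sub (huF.const_mul c)
  have hlim := tendsto_zero_of_hasDerivAt_of_integrableOn_Ioi (a := 0)
    (fun u _ => hasDerivAt_exp_linear_sub_quadratic u) hF'.integrableOn hF.integrableOn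
  have hFTC := integral_Ioi_of_hasDerivAt_of_tendsto' (a := 0)
    (fun u _ => hasDerivAt_exp_linear_sub_quadratic u) hF'.integrableOn hlim
  simp only [sub_mul, mul_assoc] at hFTC
  rw [integral_sub (hF.const_mul α).integrableOn (huF.const_mul c).integrableOn,
    integral_const_mul, integral_const_mul] at hFTC
  norm_num at hFTC
  linarith

theorem integral_Ioi_exp_linear_sub_quadratic (hc : 0 < c) :
    ∫ u in Ioi (0 : ℝ), exp (α * u - c * u ^ 2 / 2) =
      exp (α ^ 2 / (2 * c)) / √c * ∫ s in Ioi (-(α / √c)), exp (-s ^ 2 / 2) := by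
  have hk : 0 < √c := sqrt_pos.mpr hc
  -- complete the square and substitute `s = √c u - α / √c`
  have hsq : ∀ u, exp (α * u - c * u ^ 2 / 2) =
      exp (α ^ 2 / (2 * c)) * exp (-(√c * u + -(α / √c)) ^ 2 / 2) := fun u => by
    rw [← exp_add]
    congr 1
    field_simp
    rw [sq_sqrt hc.le]
    ring
  simp_rw [hsq]
  rw [integral_const_mul,
    integral_comp_mul_left_Ioi (fun x => exp (-(x + -(α / √c)) ^ 2 / 2)) 0 hk, mul_zero,
    integral_Ioi_comp_add_right (fun s => exp (-s ^ 2 / 2)), zero_add, smul_eq_mul]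
  ring

theorem integral_Ioi_exp_linear_sub_quadratic_pos (hc : 0 < c) :
    0 < ∫ u in Ioi (0 : ℝ), exp (α * u - c * u ^ 2 / 2) := by
  rw [setIntegral_pos_iff_support_of_nonneg_ae (Eventually.of_forall fun u => (exp_pos _).le)
    (integrable_exp_linear_sub_quadratic hc).integrableOn]
  simp [Function.support, exp_ne_zero]

theorem integral_Ioi_exp_linear_sub_quadratic_le (hα : α < 0) (hc : 0 < c) :
    ∫ u in Ioi (0 : ℝ), exp (α * u - c * u ^ 2 / 2) ≤ -α⁻¹ := by
  calc ∫ u in Ioi (0 : ℝ), exp (α * u - c * u ^ 2 / 2)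
      ≤ ∫ u in Ioi (0 : ℝ), exp (α * u) :=
        setIntegral_mono_on (integrable_exp_linear_sub_quadratic hc).integrableOn
          (integrableOn_exp_mul_Ioi hα 0) measurableSet_Ioi fun u _ => by
            gcongr; nlinarith [sq_nonneg u]
    _ = -α⁻¹ := by rw [integral_exp_mul_Ioi hα, mul_zero, exp_zero, neg_div, one_div]

end LinearSubQuadratic

/-- `λ_Σ` with `c = a σ²`. -/
noncomputable def lyapunovSum (α c : ℝ) : ℝ :=
  2 * α - 4 * c *
    ((∫ r in Ioi (0 : ℝ), r ^ 3 * exp ((2 * α * r ^ 2 - c * r ^ 4) / 2)) /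
      ∫ r in Ioi (0 : ℝ), r * exp ((2 * α * r ^ 2 - c * r ^ 4) / 2))

section LyapunovSum

variable {α c : ℝ}

theorem lyapunovSum_eq_sub_div_integral (hc : 0 < c) :
    lyapunovSum α c = -2 * α - 4 / ∫ u in Ioi (0 : ℝ), exp (α * u - c * u ^ 2 / 2) := by
  have hexp : ∀ r : ℝ, (2 * α * r ^ 2 - c * r ^ 4) / 2 = α * r ^ 2 - c * (r ^ 2) ^ 2 / 2 :=
    fun r => by ring
  have hnum : ∫ r in Ioi (0 : ℝ), r ^ 3 * exp ((2 * α * r ^ 2 - c * r ^ 4) / 2) =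
      2⁻¹ * ∫ u in Ioi (0 : ℝ), u * exp (α * u - c * u ^ 2 / 2) := by
    rw [← integral_Ioi_mul_comp_sq (fun u => u * exp (α * u - c * u ^ 2 / 2))]
    refine setIntegral_congr_fun measurableSet_Ioi fun r _ => ?_
    rw [hexp]
    ring
  have hden : ∫ r in Ioi (0 : ℝ), r * exp ((2 * α * r ^ 2 - c * r ^ 4) / 2) =
      2⁻¹ * ∫ u in Ioi (0 : ℝ), exp (α * u - c * u ^ 2 / 2) := by
    rw [← integral_Ioi_mul_comp_sq (fun u => exp (α * u - c * u ^ 2 / 2))]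
    simp_rw [hexp]
  have hpos := integral_Ioi_exp_linear_sub_quadratic_pos (α := α) hc
  have hmoment := mul_integral_Ioi_mul_exp_linear_sub_quadratic (α := α) hc
  rw [lyapunovSum, hnum, hden, mul_div_mul_left _ _ (inv_ne_zero two_ne_zero)]
  generalize ∫ u in Ioi (0 : ℝ), u * exp (α * u - c * u ^ 2 / 2) = I₁ at hmoment ⊢
  generalize ∫ u in Ioi (0 : ℝ), exp (α * u - c * u ^ 2 / 2) = I₀ at hpos hmoment ⊢
  field_simp
  linear_combination -4 * hmoment

theorem lyapunovSum_neg (hc : 0 < c) : lyapunovSum α c < 0 := by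
  have hpos := integral_Ioi_exp_linear_sub_quadratic_pos (α := α) hc
  rw [lyapunovSum_eq_sub_div_integral hc]
  rcases le_or_gt 0 α with hα | hα
  · have := div_pos four_pos hpos
    linarith
  · have hle : -4 * α ≤ 4 / ∫ u in Ioi (0 : ℝ), exp (α * u - c * u ^ 2 / 2) :=
      calc -4 * α = 4 / -α⁻¹ := by field_simp
        _ ≤ _ := div_le_div_of_nonneg_left zero_le_four hpos
          (integral_Ioi_exp_linear_sub_quadratic_le hα hc)
    linarith

end LyapunovSum

theorem stmt8 (a σ α : ℝ) (ha : 0 < a) (hσ : 0 < σ) :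
    2 * α - 4 * a * σ ^ 2 *
        ((∫ r in Set.Ioi (0 : ℝ), r ^ 3 * Real.exp ((2 * α * r ^ 2 - a * σ ^ 2 * r ^ 4) / 2)) /
          (∫ r in Set.Ioi (0 : ℝ), r * Real.exp ((2 * α * r ^ 2 - a * σ ^ 2 * r ^ 4) / 2))) =
      -2 * α - 4 * Real.sqrt a * σ * Real.exp (-α ^ 2 / (2 * a * σ ^ 2)) /
        (∫ r in Set.Ioi (-(α / (σ * Real.sqrt a))), Real.exp (-r ^ 2 / 2)) ∧
    2 * α - 4 * a * σ ^ 2 *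
        ((∫ r in Set.Ioi (0 : ℝ), r ^ 3 * Real.exp ((2 * α * r ^ 2 - a * σ ^ 2 * r ^ 4) / 2)) /
          (∫ r in Set.Ioi (0 : ℝ), r * Real.exp ((2 * α * r ^ 2 - a * σ ^ 2 * r ^ 4) / 2))) < 0 := by
  have hc : 0 < a * σ ^ 2 := by positivity
  rw [mul_assoc 4 a]
  change lyapunovSum α (a * σ ^ 2) = _ ∧ lyapunovSum α (a * σ ^ 2) < 0
  refine ⟨?_, lyapunovSum_neg hc⟩
  have hpos := integral_Ioi_exp_linear_sub_quadratic_pos (α := α) hc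
  have hsqrt : √(a * σ ^ 2) = σ * √a := by rw [sqrt_mul ha.le, sqrt_sq hσ.le, mul_comm]
  rw [integral_Ioi_exp_linear_sub_quadratic hc, hsqrt] at hpos
  rw [lyapunovSum_eq_sub_div_integral hc, integral_Ioi_exp_linear_sub_quadratic hc, hsqrt,
    show -α ^ 2 / (2 * a * σ ^ 2) = -(α ^ 2 / (2 * (a * σ ^ 2))) by ring, exp_neg]
  have hJ : 0 < ∫ s in Ioi (-(α / (σ * √a))), exp (-s ^ 2 / 2) :=
    pos_of_mul_pos_right hpos (by positivity)
  field_simp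
end

section
/- Let a > 0, σ > 0, α ∈ ℝ, and K = K_{a,α,σ} = 2√(2a)/(√π σ erfc(−α/√(2aσ²))). Then α + π K σ² > 0. -/
/-!
With `c = √(2a) σ` and `x = α / c`, writing `I = ∫_{-x}^∞ e^{-t²} dt` so that `erfc (-x) = 2 I / √π`,
one finds `α + π K σ² = c (x I + π) / I`. For `x ≥ 0` the numerator is clearly positive; for
`x = -y < 0` the Gaussian tail bound `y ∫_y^∞ e^{-t²} dt ≤ e^{-y²} ≤ 1`, obtained from
`e^{-t²} ≤ e^{-yt}` on `t > y`, gives `x I ≥ -1 > -π`.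
-/

open Real MeasureTheory Set

lemma integrableOn_exp_neg_sq (s : Set ℝ) : IntegrableOn (fun t : ℝ => exp (-t ^ 2)) s := by
  simpa using (integrable_exp_neg_mul_sq one_pos).integrableOn (s := s)

lemma setIntegral_exp_neg_sq_Ioi_pos (c : ℝ) : 0 < ∫ t in Ioi c, exp (-t ^ 2) := by
  refine (setIntegral_pos_iff_support_of_nonneg_ae (.of_forall fun t => (exp_pos _).le)
    (integrableOn_exp_neg_sq _)).2 ?_
  simp [Function.support, (exp_pos _).ne', volume_Ioi]

lemma mul_setIntegral_exp_neg_sq_Ioi_le {y : ℝ} (hy : 0 < y) :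
    y * ∫ t in Ioi y, exp (-t ^ 2) ≤ exp (-y ^ 2) := by
  have hle : ∫ t in Ioi y, exp (-t ^ 2) ≤ ∫ t in Ioi y, exp (-y * t) := by
    refine setIntegral_mono_on (integrableOn_exp_neg_sq _) (exp_neg_integrableOn_Ioi y hy)
      measurableSet_Ioi fun t ht => exp_le_exp.2 ?_
    nlinarith [mem_Ioi.1 ht]
  have hexp : ∫ t in Ioi y, exp (-y * t) = exp (-y ^ 2) / y := by
    rw [integral_exp_mul_Ioi (neg_lt_zero.2 hy)]
    field_simp
  calc y * ∫ t in Ioi y, exp (-t ^ 2) ≤ y * (exp (-y ^ 2) / y) := by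
        rw [← hexp]; exact mul_le_mul_of_nonneg_left hle hy.le
    _ = exp (-y ^ 2) := by field_simp

lemma neg_one_le_mul_setIntegral_exp_neg_sq_Ioi_neg (x : ℝ) :
    -1 ≤ x * ∫ t in Ioi (-x), exp (-t ^ 2) := by
  rcases le_or_gt 0 x with hx | hx
  · nlinarith [setIntegral_exp_neg_sq_Ioi_pos (-x)]
  · have htail := mul_setIntegral_exp_neg_sq_Ioi_le (neg_pos.2 hx)
    have hexp : exp (-(-x) ^ 2) ≤ 1 := exp_le_one_iff.2 (by nlinarith)
    linarith

theorem stmt10 (a σ α : ℝ) (ha : 0 < a) (hσ : 0 < σ)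
    (erfc : ℝ → ℝ)
    (herfc : ∀ x : ℝ, erfc x = (2 / Real.sqrt π) * ∫ t in Set.Ioi x, Real.exp (-t ^ 2))
    (K : ℝ)
    (hK : K = 2 * Real.sqrt (2 * a) /
      (Real.sqrt π * σ * erfc (-(α / Real.sqrt (2 * a * σ ^ 2))))) :
    0 < α + π * K * σ ^ 2 := by
  set c := √(2 * a) * σ
  have hc : 0 < c := mul_pos (sqrt_pos.2 (by linarith)) hσ
  have hsqrt : √(2 * a * σ ^ 2) = c := by rw [sqrt_mul (by linarith), sqrt_sq hσ.le]
  rw [hsqrt] at hK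
  set x := α / c
  set I := ∫ t in Ioi (-x), exp (-t ^ 2)
  have hI : 0 < I := setIntegral_exp_neg_sq_Ioi_pos (-x)
  have hxI : -1 ≤ x * I := neg_one_le_mul_setIntegral_exp_neg_sq_Ioi_neg x
  have hfactor : α + π * K * σ ^ 2 = c * (x * I + π) / I := by
    have hE : erfc (-x) = 2 / √π * I := herfc (-x)
    have hα : α = x * c := (div_mul_cancel₀ α hc.ne').symm
    rw [hK, hE, hα]
    field_simp
    ring
  rw [hfactor]
  exact div_pos (mul_pos hc (by linarith [pi_gt_three])) hI
end
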